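/- Let G be a group and let F be a finite sequence of elements of G whose product lies in the center of G. Let τ'₁, τ'₂, …, τ'_r ∈ G be such that for each h there exists a finite sequence F'_h with F Hurwitz equivalent to (τ'_h) ++ F'_h, and set ψ := τ'₁τ'₂⋯τ'_r. Then the simultaneously conjugated sequence (F)_ψ is Hurwitz equivalent to F. -/

import Mathlib

/-- An elementary Hurwitz move: replace two consecutive entries `x, y` by
`y, y⁻¹ * x * y`. -/
inductive HurwitzMove {G : Type*} [Group G] : List G → List G → Prop
  | move (A B : List G) (x y : G) :
      HurwitzMove (A ++ x :: y :: B) (A ++ y :: (y⁻¹ * x * y) :: B)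

/-- Hurwitz equivalence: the smallest equivalence relation on finite sequences of
elements of `G` containing all elementary Hurwitz moves. -/
def HurwitzEquiv {G : Type*} [Group G] : List G → List G → Prop :=
  Relation.EqvGen HurwitzMove

/-- Simultaneous conjugation of a sequence by an element `b`. -/
def conjList {G : Type*} [Group G] (F : List G) (b : G) : List G :=
  F.map fun g => b⁻¹ * g * b

section Aux

variable {G : Type*} [Group G]

lemma hmove_cons (g : G) {l₁ l₂ : List G} (h : HurwitzMove l₁ l₂) :
    HurwitzMove (g :: l₁) (g :: l₂) := by
  cases h with
  | move A B x y => exact HurwitzMove.move (g :: A) B x y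

lemma hequiv_cons (g : G) {l₁ l₂ : List G} (h : HurwitzEquiv l₁ l₂) :
    HurwitzEquiv (g :: l₁) (g :: l₂) := by
  induction h with
  | rel a b hab => exact .rel _ _ (hmove_cons g hab)
  | refl a => exact .refl _
  | symm a b _ ih => exact .symm _ _ ih
  | trans a b c _ _ ih1 ih2 => exact .trans _ _ _ ih1 ih2

lemma hmove_conj (b : G) {l₁ l₂ : List G} (h : HurwitzMove l₁ l₂) :
    HurwitzMove (conjList l₁ b) (conjList l₂ b) := by
  cases h with
  | move A B x y =>
    have key := HurwitzMove.move (conjList A b) (conjList B b) (b⁻¹ * x * b) (b⁻¹ * y * b)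
    have e1 : conjList (A ++ x :: y :: B) b =
        conjList A b ++ (b⁻¹ * x * b) :: (b⁻¹ * y * b) :: conjList B b := by
      simp [conjList]
    have e2 : conjList (A ++ y :: (y⁻¹ * x * y) :: B) b =
        conjList A b ++ (b⁻¹ * y * b) ::
          ((b⁻¹ * y * b)⁻¹ * (b⁻¹ * x * b) * (b⁻¹ * y * b)) :: conjList B b := by
      simp only [conjList, List.map_append, List.map_cons]
      congr 3
      group
    rw [e1, e2]
    exact key

lemma hequiv_conj (b : G) {l₁ l₂ : List G} (h : HurwitzEquiv l₁ l₂) :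
    HurwitzEquiv (conjList l₁ b) (conjList l₂ b) := by
  induction h with
  | rel a c hab => exact .rel _ _ (hmove_conj b hab)
  | refl a => exact .refl _
  | symm a c _ ih => exact .symm _ _ ih
  | trans a c d _ _ ih1 ih2 => exact .trans _ _ _ ih1 ih2

lemma hmove_prod {l₁ l₂ : List G} (h : HurwitzMove l₁ l₂) : l₁.prod = l₂.prod := by
  cases h with
  | move A B x y =>
    simp only [List.prod_append, List.prod_cons]
    congr 1
    rw [← mul_assoc, ← mul_assoc, ← mul_assoc]
    congr 1
    group

lemma hequiv_prod {l₁ l₂ : List G} (h : HurwitzEquiv l₁ l₂) : l₁.prod = l₂.prod := by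
  induction h with
  | rel a c hab => exact hmove_prod hab
  | refl a => rfl
  | symm a c _ ih => exact ih.symm
  | trans a c d _ _ ih1 ih2 => exact ih1.trans ih2

lemma hshift (τ : G) (L : List G) :
    HurwitzEquiv (τ :: L) (L ++ [L.prod⁻¹ * τ * L.prod]) := by
  induction L generalizing τ with
  | nil => simp only [List.prod_nil, inv_one, mul_one, one_mul, List.nil_append]; exact .refl _
  | cons g L ih =>
    have m : HurwitzMove (τ :: g :: L) (g :: (g⁻¹ * τ * g) :: L) :=
      HurwitzMove.move [] L τ g
    refine Relation.EqvGen.trans _ _ _ (.rel _ _ m) ?_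
    have h2 := hequiv_cons g (ih (g⁻¹ * τ * g))
    have e : g :: (L ++ [L.prod⁻¹ * (g⁻¹ * τ * g) * L.prod]) =
        (g :: L) ++ [(g :: L).prod⁻¹ * τ * (g :: L).prod] := by
      simp only [List.prod_cons, List.cons_append]
      congr 3
      group
    rwa [e] at h2

lemma hshiftBack (y : G) (L : List G) :
    HurwitzEquiv (L ++ [y]) (y :: conjList L y) := by
  induction L with
  | nil => simp only [conjList, List.map_nil, List.nil_append]; exact .refl _
  | cons g L ih =>
    refine Relation.EqvGen.trans _ _ _ (hequiv_cons g ih) ?_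
    have m : HurwitzMove (g :: y :: conjList L y) (y :: (y⁻¹ * g * y) :: conjList L y) :=
      HurwitzMove.move [] (conjList L y) g y
    have e : (y :: (y⁻¹ * g * y) :: conjList L y) = y :: conjList (g :: L) y := by
      simp [conjList]
    rw [← e]
    exact .rel _ _ m

lemma auroux_one {F : List G} {τ : G} {F' : List G}
    (hcent : F.prod ∈ Subgroup.center G)
    (h : HurwitzEquiv F (τ :: F')) :
    HurwitzEquiv (conjList F τ) F := by
  rw [Subgroup.mem_center_iff] at hcent
  have hp : F.prod = τ * F'.prod := by rw [hequiv_prod h]; simp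
  have hF' : F'.prod = τ⁻¹ * F.prod := by rw [hp]; group
  have hτ : F'.prod⁻¹ * τ * F'.prod = τ := by
    rw [hF']
    have hc := hcent τ
    rw [mul_inv_rev, inv_inv]
    calc F.prod⁻¹ * τ * τ * (τ⁻¹ * F.prod) = F.prod⁻¹ * (τ * F.prod) := by group
    _ = F.prod⁻¹ * (F.prod * τ) := by rw [hc]
    _ = τ := by group
  have h1 : HurwitzEquiv (τ :: F') (F' ++ [τ]) := by
    have := hshift τ F'
    rwa [hτ] at this
  have h2 : HurwitzEquiv (F' ++ [τ]) (τ :: conjList F' τ) := hshiftBack τ F'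
  have h3 : conjList (τ :: F') τ = τ :: conjList F' τ := by
    simp [conjList]
  have h4 : HurwitzEquiv (conjList F τ) (τ :: conjList F' τ) := by
    rw [← h3]; exact hequiv_conj τ h
  exact .trans _ _ _ h4 (.trans _ _ _ (.symm _ _ h2) (.trans _ _ _ (.symm _ _ h1) (.symm _ _ h)))

lemma conjList_mul (F : List G) (b c : G) :
    conjList (conjList F b) c = conjList F (b * c) := by
  simp only [conjList, List.map_map]
  apply List.map_congr_left
  intro g _
  simp [mul_assoc]

end Aux

/-- **Auroux's Lemma**, second assertion: if the product of `F` is central and each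
`τ'ₕ` in a list `T` begins some factorization Hurwitz equivalent to `F`, then
conjugating `F` simultaneously by `ψ = τ'₁⋯τ'ᵣ` yields a sequence Hurwitz
equivalent to `F`. -/
theorem auroux_lemma_product {G : Type*} [Group G] (F T : List G)
    (hcent : F.prod ∈ Subgroup.center G)
    (h : ∀ τ ∈ T, ∃ F' : List G, HurwitzEquiv F (τ :: F')) :
    HurwitzEquiv (conjList F T.prod) F := by
  induction T with
  | nil =>
    have : conjList F ([] : List G).prod = F := by simp [conjList]
    rw [this]
    exact .refl _
  | cons τ T ih =>
    obtain ⟨F', hF'⟩ := h τ List.mem_cons_self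
    have a1 : HurwitzEquiv (conjList F τ) F := auroux_one hcent hF'
    have step : HurwitzEquiv (conjList (conjList F τ) T.prod) (conjList F T.prod) :=
      hequiv_conj T.prod a1
    have e : conjList F (τ :: T).prod = conjList (conjList F τ) T.prod := by
      rw [conjList_mul, List.prod_cons]
    rw [e]
    exact .trans _ _ _ step (ih fun σ hσ => h σ (List.mem_cons_of_mem τ hσ))
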